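/- arXiv:2001.01422 — 3 statements merged into one kernel-verified Lean document; each statement's English description precedes it below -/
import Mathlib

section
/- The map φ(m) = (m·|m|₂ - 1)/2, i.e., φ(m) = (m/2^{ν₂(m)} - 1)/2, is a bijection from {l+1, l+2, ..., 2l+1} to {0, 1, ..., l}, and for every m in the domain, τ₂(m) = τ₂(φ(m)) + 1. -/
/-- binary digit sum -/
def tau2 (n : ℕ) : ℕ := (Nat.digits 2 n).sum

/-- `φ(m) = (m·2^{-ν₂(m)} - 1)/2` -/
def phi (m : ℕ) : ℕ := (m / 2 ^ padicValNat 2 m - 1) / 2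

/-! Write `m = 2 ^ k * (2 * n + 1)`: then `φ m = n`, and the binary expansion of `m` is that of
`n` followed by a digit `1` and `k` zeros, so `τ₂ m = τ₂ n + 1`. Two numbers with the same odd part
differ by a power of two, so at most one of them lies in the window `(l, 2l+1]`, and every odd
number `2n + 1 ≤ 2l + 1` can be doubled into that window; hence `φ` is a bijection from the window
onto `[0, l]`. -/

lemma tau2_two_mul_add_one (n : ℕ) : tau2 (2 * n + 1) = tau2 n + 1 := by
  rw [tau2, add_comm, Nat.digits_add 2 one_lt_two 1 n one_lt_two (Or.inl one_ne_zero),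
    List.sum_cons, add_comm, tau2]

lemma tau2_two_pow_mul (k n : ℕ) : tau2 (2 ^ k * n) = tau2 n := by
  rcases n.eq_zero_or_pos with rfl | hn
  · simp
  · simp [tau2, Nat.digits_base_pow_mul one_lt_two hn]

lemma padicValNat_two_pow_mul_odd (k n : ℕ) : padicValNat 2 (2 ^ k * (2 * n + 1)) = k := by
  rw [padicValNat.mul (by positivity) (by omega), padicValNat.prime_pow,
    padicValNat.eq_zero_of_not_dvd (by omega), add_zero]

lemma phi_two_pow_mul_odd (k n : ℕ) : phi (2 ^ k * (2 * n + 1)) = n := by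
  rw [phi, padicValNat_two_pow_mul_odd, Nat.mul_div_cancel_left _ (by positivity)]
  omega

lemma exists_eq_two_pow_mul_two_mul_phi_add_one {m : ℕ} (hm : m ≠ 0) :
    ∃ k, m = 2 ^ k * (2 * phi m + 1) := by
  obtain ⟨k, _, ⟨n, rfl⟩, rfl⟩ := Nat.exists_eq_two_pow_mul_odd hm
  exact ⟨k, by rw [phi_two_pow_mul_odd]⟩

lemma two_mul_phi_add_one_le {m : ℕ} (hm : m ≠ 0) : 2 * phi m + 1 ≤ m := by
  obtain ⟨k, hk⟩ := exists_eq_two_pow_mul_two_mul_phi_add_one hm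
  conv_rhs => rw [hk]
  exact Nat.le_mul_of_pos_left _ (by positivity)

lemma tau2_eq_tau2_phi_add_one {m : ℕ} (hm : m ≠ 0) : tau2 m = tau2 (phi m) + 1 := by
  obtain ⟨k, hk⟩ := exists_eq_two_pow_mul_two_mul_phi_add_one hm
  rw [hk, tau2_two_pow_mul, tau2_two_mul_add_one, ← hk]

lemma two_pow_mul_eq_of_mem_Icc {l a b o : ℕ} (ha : 2 ^ a * o ∈ Set.Icc (l + 1) (2 * l + 1))
    (hb : 2 ^ b * o ∈ Set.Icc (l + 1) (2 * l + 1)) : 2 ^ a * o = 2 ^ b * o := by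
  wlog hab : a ≤ b generalizing a b
  · exact (this hb ha (le_of_not_ge hab)).symm
  rcases hab.eq_or_lt with rfl | hlt
  · rfl
  have hdouble : 2 * (2 ^ a * o) ≤ 2 ^ b * o := by
    rw [← mul_assoc, ← pow_succ']
    exact Nat.mul_le_mul_right o (Nat.pow_le_pow_right two_pos hlt)
  simp only [Set.mem_Icc] at ha hb
  omega

lemma exists_two_pow_mul_mem_Icc {l o : ℕ} (ho : 0 < o) (hol : o ≤ 2 * l + 1) :
    ∃ k, 2 ^ k * o ∈ Set.Icc (l + 1) (2 * l + 1) := by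
  set k := Nat.log 2 ((2 * l + 1) / o)
  have hq : (2 * l + 1) / o ≠ 0 := (Nat.div_pos hol ho).ne'
  have hle : 2 ^ k * o ≤ 2 * l + 1 :=
    (Nat.le_div_iff_mul_le ho).1 (Nat.pow_log_le_self 2 hq)
  have hlt : 2 * l + 1 < 2 ^ (k + 1) * o :=
    (Nat.div_lt_iff_lt_mul ho).1 (Nat.lt_pow_succ_log_self one_lt_two _)
  rw [pow_succ, mul_right_comm] at hlt
  exact ⟨k, by omega, hle⟩

lemma ne_zero_of_mem_Icc_succ {l m : ℕ} (hm : m ∈ Set.Icc (l + 1) (2 * l + 1)) : m ≠ 0 := by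
  have := hm.1; omega

lemma phi_mapsTo (l : ℕ) : Set.MapsTo phi (Set.Icc (l + 1) (2 * l + 1)) (Set.Icc 0 l) := by
  intro m hm
  have := two_mul_phi_add_one_le (ne_zero_of_mem_Icc_succ hm)
  have := hm.2
  exact ⟨Nat.zero_le _, by omega⟩

lemma phi_injOn (l : ℕ) : Set.InjOn phi (Set.Icc (l + 1) (2 * l + 1)) := by
  intro m₁ hm₁ m₂ hm₂ heq
  obtain ⟨k₁, hk₁⟩ := exists_eq_two_pow_mul_two_mul_phi_add_one (ne_zero_of_mem_Icc_succ hm₁)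
  obtain ⟨k₂, hk₂⟩ := exists_eq_two_pow_mul_two_mul_phi_add_one (ne_zero_of_mem_Icc_succ hm₂)
  rw [heq] at hk₁
  calc m₁ = 2 ^ k₁ * (2 * phi m₂ + 1) := hk₁
    _ = 2 ^ k₂ * (2 * phi m₂ + 1) := two_pow_mul_eq_of_mem_Icc (hk₁ ▸ hm₁) (hk₂ ▸ hm₂)
    _ = m₂ := hk₂.symm

lemma phi_surjOn (l : ℕ) : Set.SurjOn phi (Set.Icc (l + 1) (2 * l + 1)) (Set.Icc 0 l) := by
  intro n hn
  have := hn.2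
  obtain ⟨k, hk⟩ := exists_two_pow_mul_mem_Icc (l := l) (o := 2 * n + 1) (by omega) (by omega)
  exact ⟨_, hk, phi_two_pow_mul_odd k n⟩

/-- `φ` is a bijection from `{l+1, …, 2l+1}` onto `{0, …, l}`, and it decreases
the binary digit sum by exactly one. -/
theorem phi_bijOn (l : ℕ) :
    Set.BijOn phi (Set.Icc (l + 1) (2 * l + 1)) (Set.Icc 0 l) ∧
    ∀ m ∈ Set.Icc (l + 1) (2 * l + 1), tau2 m = tau2 (phi m) + 1 :=
  ⟨⟨phi_mapsTo l, phi_injOn l, phi_surjOn l⟩,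
    fun _ hm => tau2_eq_tau2_phi_add_one (ne_zero_of_mem_Icc_succ hm)⟩
end

section
/- With β_m as in the Thue-Morse continued fraction recursion, for all n ≥ 1 one has ν(∏_{i=1}^n β_i) = 2·τ₂(n-1), where ν is the degree valuation on ℚ(u) and τ₂ is the binary digit sum. -/
/-!
Write `d m := τ₂(m) - τ₂(m - 1)`. Since `τ₂(2k) = τ₂(k)` and `τ₂(2k + 1) = τ₂(k) + 1`, one has
`d (2k + 1) = 1`, `d (2k + 2) = d (k + 1) - 1` and `d ≤ 1`. Strong induction on the recursion then
gives `ν(β_{m+1}) = 2 d m`: for `β_{2k+3} = -β_{k+2}/β_{2k+2}` the valuations subtract, and for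
`β_{2k+4} = u² + α_{k+2} - β_{2k+3}` the term `u²` dominates, because `ν(α_{k+2}) = 1` and
`ν(β_{2k+3}) = 2 (d (k + 1) - 1) ≤ 0`. The valuation of the product is then the telescoping sum
`2 ∑_{m < n} d m = 2 τ₂(n - 1)`.
-/

lemma tau2_two_mul (n : ℕ) : tau2 (2 * n) = tau2 n := by
  rcases Nat.eq_zero_or_pos n with rfl | hn
  · rfl
  · rw [tau2, Nat.digits_def' one_lt_two (by omega)]
    simp [tau2, Nat.mul_div_cancel_left n two_pos]

lemma tau2_succ_le (n : ℕ) : tau2 (n + 1) ≤ tau2 n + 1 := by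
  induction n using Nat.strong_induction_on with
  | _ n ih =>
    obtain ⟨k, rfl | rfl⟩ := Nat.even_or_odd' n
    · rw [tau2_two_mul_add_one, tau2_two_mul]
    · rw [show 2 * k + 1 + 1 = 2 * (k + 1) by ring, tau2_two_mul, tau2_two_mul_add_one]
      have := ih k (by omega)
      omega

-- At `m = 0` the truncated `0 - 1 = 0` gives `tau2Jump 0 = 0`, matching `ν(β₁) = 0`.
def tau2Jump (m : ℕ) : ℤ := tau2 m - tau2 (m - 1)

lemma tau2Jump_two_mul_add_one (k : ℕ) : tau2Jump (2 * k + 1) = 1 := by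
  simp [tau2Jump, tau2_two_mul_add_one, tau2_two_mul]

lemma tau2Jump_two_mul_add_two (k : ℕ) : tau2Jump (2 * k + 2) = tau2Jump (k + 1) - 1 := by
  rw [tau2Jump, tau2Jump, show 2 * k + 2 = 2 * (k + 1) by ring, tau2_two_mul,
    show 2 * (k + 1) - 1 = 2 * k + 1 by omega, tau2_two_mul_add_one]
  push_cast
  ring

lemma tau2Jump_succ_le_one (k : ℕ) : tau2Jump (k + 1) ≤ 1 := by
  have := tau2_succ_le k
  simp only [tau2Jump, Nat.add_sub_cancel]
  omega

lemma sum_Icc_tau2Jump {n : ℕ} (hn : 1 ≤ n) :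
    ∑ i ∈ Finset.Icc 1 n, tau2Jump (i - 1) = tau2 (n - 1) := by
  induction n, hn using Nat.le_induction with
  | base => rfl
  | succ n hn ih =>
    rw [Finset.sum_Icc_succ_top (by omega), ih, tau2Jump]
    simp

namespace RatFunc

variable {K : Type*} [Field K]

lemma add_ne_zero_of_intDegree_lt {x y : RatFunc K}
    (h : y.intDegree < x.intDegree) : x + y ≠ 0 := by
  intro hxy
  rw [← neg_eq_of_add_eq_zero_right hxy, intDegree_neg] at h
  exact h.false

lemma intDegree_add_of_intDegree_lt {x y : RatFunc K} (hx : x ≠ 0)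
    (h : y.intDegree < x.intDegree) : (x + y).intDegree = x.intDegree := by
  rcases eq_or_ne y 0 with rfl | hy
  · rw [add_zero]
  have hxy := add_ne_zero_of_intDegree_lt h
  have upper := intDegree_add_le hy hxy
  have lower := intDegree_add_le (neg_ne_zero.mpr hy) (x := x + y) (by simpa using hx)
  rw [add_neg_cancel_right, intDegree_neg] at lower
  omega

lemma intDegree_X_sq : (X ^ 2 : RatFunc K).intDegree = 2 := by
  rw [sq, intDegree_mul X_ne_zero X_ne_zero, intDegree_X]
  rfl

lemma intDegree_prod {ι : Type*} {s : Finset ι} {f : ι → RatFunc K} (hf : ∀ i ∈ s, f i ≠ 0) :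
    (∏ i ∈ s, f i).intDegree = ∑ i ∈ s, (f i).intDegree := by
  classical
  induction s using Finset.induction_on with
  | empty => simp
  | insert a s ha ih =>
    rw [Finset.prod_insert ha, Finset.sum_insert ha,
      intDegree_mul (hf a (by simp)) (Finset.prod_ne_zero_iff.mpr fun i hi => hf i (by simp [hi])),
      ih fun i hi => hf i (by simp [hi])]

end RatFunc

open RatFunc

section Recursion

variable {K : Type*} [Field K] {α β : ℕ → RatFunc K}
  (hα : ∀ k : ℕ, (α (k + 2)).intDegree < 2)
  (hβ1 : β 1 = 1)
  (hβ2 : β 2 = X ^ 2 - X)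
  (hβodd : ∀ k : ℕ, β (2 * k + 3) = -(β (k + 2) / β (2 * k + 2)))
  (hβeven : ∀ k : ℕ, β (2 * k + 4) = α (k + 2) + X ^ 2 - β (2 * k + 3))
include hα hβ1 hβ2 hβodd hβeven

lemma beta_ne_zero_and_intDegree (m : ℕ) :
    β (m + 1) ≠ 0 ∧ (β (m + 1)).intDegree = 2 * tau2Jump m := by
  induction m using Nat.strong_induction_on with
  | _ m ih =>
    match m with
    | 0 => exact ⟨by simp [hβ1], by rw [hβ1, intDegree_one]; rfl⟩
    | 1 =>
      have hX : (-X : RatFunc K).intDegree < (X ^ 2 : RatFunc K).intDegree := by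
        rw [intDegree_neg, intDegree_X, intDegree_X_sq]
        norm_num
      rw [show 1 + 1 = 2 from rfl, hβ2, sub_eq_add_neg]
      refine ⟨add_ne_zero_of_intDegree_lt hX, ?_⟩
      rw [intDegree_add_of_intDegree_lt (pow_ne_zero 2 X_ne_zero) hX, intDegree_X_sq]
      rfl
    | j + 2 =>
      obtain ⟨k, rfl | rfl⟩ := Nat.even_or_odd' j
      · obtain ⟨hnum, hdeg_num⟩ := ih (k + 1) (by omega)
        obtain ⟨hden, hdeg_den⟩ := ih (2 * k + 1) (by omega)
        rw [show 2 * k + 2 + 1 = 2 * k + 3 from rfl, hβodd k]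
        refine ⟨neg_ne_zero.mpr (div_ne_zero hnum hden), ?_⟩
        rw [intDegree_neg, intDegree_div hnum hden, hdeg_num, hdeg_den,
          tau2Jump_two_mul_add_two, tau2Jump_two_mul_add_one]
        ring
      · obtain ⟨-, hdeg_prev⟩ := ih (2 * k + 2) (by omega)
        have hα' : (α (k + 2)).intDegree < (X ^ 2 : RatFunc K).intDegree := by
          rw [intDegree_X_sq]
          exact hα k
        have hX2α := add_ne_zero_of_intDegree_lt hα'
        have hdeg_X2α := intDegree_add_of_intDegree_lt (pow_ne_zero 2 X_ne_zero) hα'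
        have hβ' : (-β (2 * k + 3)).intDegree < (X ^ 2 + α (k + 2)).intDegree := by
          rw [intDegree_neg, hdeg_X2α, intDegree_X_sq]
          rw [show 2 * k + 3 = 2 * k + 2 + 1 from rfl, hdeg_prev, tau2Jump_two_mul_add_two]
          linarith [tau2Jump_succ_le_one k]
        rw [show 2 * k + 1 + 2 + 1 = 2 * k + 4 from rfl, hβeven k,
          show α (k + 2) + X ^ 2 - β (2 * k + 3) = X ^ 2 + α (k + 2) + -β (2 * k + 3) by ring]
        refine ⟨add_ne_zero_of_intDegree_lt hβ', ?_⟩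
        rw [intDegree_add_of_intDegree_lt hX2α hβ', hdeg_X2α, intDegree_X_sq,
          show 2 * k + 1 + 2 = 2 * (k + 1) + 1 by ring, tau2Jump_two_mul_add_one]
        rfl

end Recursion

/-- With `β_m` as in the Thue–Morse continued fraction recursion, for all `n ≥ 1`
one has `ν(∏_{i=1}^n β_i) = 2·τ₂(n-1)`, where `ν` is the degree valuation
(`RatFunc.intDegree`) on `ℚ(u)`. -/
theorem prod_beta_intDegree
    (α β : ℕ → RatFunc ℚ)
    (hα : ∀ k : ℕ, α (2 * k + 1) = -RatFunc.X ∧ α (2 * k + 2) = RatFunc.X)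
    (hβ1 : β 1 = 1)
    (hβ2 : β 2 = RatFunc.X ^ 2 - RatFunc.X)
    (hβodd : ∀ k : ℕ, β (2 * k + 3) = -(β (k + 2) / β (2 * k + 2)))
    (hβeven : ∀ k : ℕ, β (2 * k + 4) = α (k + 2) + RatFunc.X ^ 2 - β (2 * k + 3)) :
    ∀ n : ℕ, 1 ≤ n →
      (∏ i ∈ Finset.Icc 1 n, β i).intDegree = 2 * (tau2 (n - 1) : ℤ) := by
  intro n hn
  have hα_deg : ∀ k, (α (k + 2)).intDegree < 2 := fun k => by
    obtain ⟨l, rfl | rfl⟩ := Nat.even_or_odd' k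
    · rw [(hα l).2, intDegree_X]
      norm_num
    · rw [show 2 * l + 1 + 2 = 2 * (l + 1) + 1 by ring, (hα (l + 1)).1, intDegree_neg, intDegree_X]
      norm_num
  have hβ : ∀ i ∈ Finset.Icc 1 n, β i ≠ 0 ∧ (β i).intDegree = 2 * tau2Jump (i - 1) := by
    intro i hi
    obtain ⟨m, rfl⟩ : ∃ m, i = m + 1 := ⟨i - 1, by grind⟩
    exact beta_ne_zero_and_intDegree hα_deg hβ1 hβ2 hβodd hβeven m
  rw [intDegree_prod fun i hi => (hβ i hi).1, Finset.sum_congr rfl fun i hi => (hβ i hi).2,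
    ← Finset.mul_sum, sum_Icc_tau2Jump hn]
end

section
/- Let F be a finite field, u ∈ F nonzero with u ≠ 1, and let a_m = u^{τ₂(m-1)} be the coefficients of the generalised Thue-Morse series g_u over F. Then there exists an even positive integer n such that the 2×2 Hankel determinant a_n·a_{n+2} - a_{n+1}² vanishes; namely any n with ν₂(n) equal to the multiplicative order of u. -/
lemma tau2_two_pow (d : ℕ) : tau2 (2 ^ d) = 1 := by
  induction d with
  | zero => simp [tau2]
  | succ d ih => rw [pow_succ', tau2_two_mul, ih]

lemma tau2_two_pow_sub_one (d : ℕ) : tau2 (2 ^ d - 1) = d := by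
  induction d with
  | zero => rfl
  | succ d ih =>
    have h : 2 ^ (d + 1) - 1 = 2 * (2 ^ d - 1) + 1 := by
      have := Nat.one_le_two_pow (n := d)
      rw [pow_succ']
      omega
    rw [h, tau2_two_mul_add_one, ih]

lemma tau2_two_pow_add_one {d : ℕ} (hd : d ≠ 0) : tau2 (2 ^ d + 1) = 2 := by
  obtain ⟨k, rfl⟩ := Nat.exists_eq_succ_of_ne_zero hd
  rw [pow_succ', tau2_two_mul_add_one, tau2_two_pow]

lemma pow_tau2_hankel_two_pow {M : Type*} [CommMonoid M] (u : M) {d : ℕ} (hd : d ≠ 0) :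
    u ^ tau2 (2 ^ d - 1) * u ^ tau2 (2 ^ d + 1) = u ^ d * (u ^ tau2 (2 ^ d)) ^ 2 := by
  rw [tau2_two_pow_sub_one, tau2_two_pow_add_one hd, tau2_two_pow, pow_one]

theorem hankel_det_vanishes_finite_field_general
    (F : Type*) [Field F] [Fintype F] (u : F) (hu0 : u ≠ 0)
    (a : ℕ → F) (ha : ∀ m, a m = u ^ tau2 (m - 1)) :
    ∃ n : ℕ, 0 < n ∧ Even n ∧ padicValNat 2 n = orderOf u ∧
      a n * a (n + 2) - a (n + 1) ^ 2 = 0 := by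
  have hd : orderOf u ≠ 0 := (isOfFinOrder_iff_isUnit.mpr hu0.isUnit).orderOf_pos.ne'
  refine ⟨2 ^ orderOf u, by positivity, Nat.even_pow.mpr ⟨even_two, hd⟩,
    padicValNat.prime_pow _, ?_⟩
  rw [ha, ha, ha, Nat.add_sub_cancel, show 2 ^ orderOf u + 2 - 1 = 2 ^ orderOf u + 1 from rfl,
    pow_tau2_hankel_two_pow u hd, pow_orderOf_eq_one, one_mul, sub_self]

/-- Over a finite field `F`, for `u ≠ 0, 1` and `a_m = u^{τ₂(m-1)}`, there exists an
even positive integer `n` (namely one with `ν₂(n) = ord(u)`) for which the 2×2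
Hankel determinant `a_n·a_{n+2} - a_{n+1}²` vanishes. -/
theorem hankel_det_vanishes_finite_field
    (F : Type*) [Field F] [Fintype F] (u : F) (hu0 : u ≠ 0) (hu1 : u ≠ 1)
    (a : ℕ → F) (ha : ∀ m, a m = u ^ tau2 (m - 1)) :
    ∃ n : ℕ, 0 < n ∧ Even n ∧ padicValNat 2 n = orderOf u ∧
      a n * a (n + 2) - a (n + 1) ^ 2 = 0 :=
  hankel_det_vanishes_finite_field_general F u hu0 a ha
end
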